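/- arXiv:2604.22316 — 2 statements merged into one kernel-verified Lean document; each statement's English description precedes it below -/
import Mathlib

section
/- Let V = V₁ + V₂ on ℝ³, where V₁ is Borel measurable, locally integrable and satisfies the Rollnik condition ∫∫_{ℝ³×ℝ³} |V₁(x)||V₁(y)|/|x−y|² dx dy < ∞, and V₂ is Borel measurable and essentially bounded. Then V satisfies condition (V.2): for every t > 0, the function x ↦ |V(x)| exp(−t|x|²) is integrable on ℝ³. -/
open MeasureTheory Metric Set
open scoped ENNReal

namespace RollnikAux

lemma gauss_integrable {t : ℝ} (ht : 0 < t) :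
    Integrable (fun x : EuclideanSpace ℝ (Fin 3) => Real.exp (-t * ‖x‖ ^ 2)) volume := by
  have h := (GaussianFourier.integrable_cexp_neg_mul_sq_norm_add
      (V := EuclideanSpace ℝ (Fin 3)) (b := (t : ℂ)) (by simpa using ht) 0 0).norm
  refine h.congr (Filter.Eventually.of_forall fun x => ?_)
  simp only [Complex.norm_exp, zero_mul, add_zero]
  norm_cast

lemma piece1 {V₁ : EuclideanSpace ℝ (Fin 3) → ℝ} (hV₁ : Measurable V₁)
    (hloc : LocallyIntegrable V₁ volume)
    (hRollnik : ∫⁻ x, ∫⁻ y, ENNReal.ofReal (|V₁ x| * |V₁ y| / ‖x - y‖ ^ 2) < ⊤)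
    {t : ℝ} (ht : 0 < t) :
    Integrable (fun x : EuclideanSpace ℝ (Fin 3) =>
      |V₁ x| * Real.exp (-t * ‖x‖ ^ 2)) volume := by
  by_cases hz : V₁ =ᵐ[volume] 0
  · refine (integrable_zero _ ℝ volume).congr ?_
    filter_upwards [hz] with x hx
    simp [hx]
  -- there is a ball on which V₁ has positive mass
  rw [Filter.EventuallyEq, ae_iff] at hz
  simp only [Pi.zero_apply] at hz
  have hball : ∃ n : ℕ, volume ({x : EuclideanSpace ℝ (Fin 3) | V₁ x ≠ 0}
      ∩ ball 0 ((n : ℝ) + 1)) ≠ 0 := by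
    by_contra hc
    push_neg at hc
    refine hz ?_
    have hsub : {x : EuclideanSpace ℝ (Fin 3) | ¬ V₁ x = 0} ⊆
        ⋃ n : ℕ, ({x : EuclideanSpace ℝ (Fin 3) | V₁ x ≠ 0} ∩ ball 0 ((n : ℝ) + 1)) := by
      intro x hx
      obtain ⟨n, hn⟩ := exists_nat_gt ‖x‖
      refine Set.mem_iUnion.mpr ⟨n, hx, ?_⟩
      simp only [mem_ball, dist_zero_right]
      linarith
    exact measure_mono_null hsub (measure_iUnion_null fun n => hc n)
  obtain ⟨n, hn⟩ := hball
  set R : ℝ := (n : ℝ) + 1 with hR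
  have hR0 : 0 < R := by positivity
  set m : ℝ≥0∞ := ∫⁻ y in ball (0 : EuclideanSpace ℝ (Fin 3)) R, ENNReal.ofReal |V₁ y| with hm
  have hmeasOf : Measurable fun y => ENNReal.ofReal |V₁ y| :=
    ENNReal.measurable_ofReal.comp hV₁.abs
  have hmpos : m ≠ 0 := by
    intro h0
    have hz0 : (fun y => ENNReal.ofReal |V₁ y|) =ᵐ[volume.restrict (ball (0:EuclideanSpace ℝ (Fin 3)) R)] 0 :=
      (lintegral_eq_zero_iff hmeasOf).mp h0
    have hz1 : ∀ᵐ x ∂(volume : Measure (EuclideanSpace ℝ (Fin 3))),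
        x ∈ ball (0:EuclideanSpace ℝ (Fin 3)) R → ENNReal.ofReal |V₁ x| = 0 :=
      (ae_restrict_iff' measurableSet_ball).mp hz0
    refine hn (measure_mono_null ?_ (ae_iff.mp hz1))
    rintro x ⟨hx1, hx2⟩
    simp only [mem_setOf_eq]
    intro hP
    have h2 := hP hx2
    rw [ENNReal.ofReal_eq_zero, abs_nonpos_iff] at h2
    exact hx1 h2
  have hmfin : m < ⊤ := by
    have hInt : IntegrableOn V₁ (closedBall (0:EuclideanSpace ℝ (Fin 3)) R) volume :=
      hloc.integrableOn_isCompact (isCompact_closedBall _ _)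
    have h1 : m ≤ ∫⁻ y in closedBall (0:EuclideanSpace ℝ (Fin 3)) R, ENNReal.ofReal |V₁ y| :=
      lintegral_mono_set ball_subset_closedBall
    refine lt_of_le_of_lt h1 ?_
    have := hInt.2
    rw [hasFiniteIntegral_iff_norm] at this
    simpa [Real.norm_eq_abs] using this
  -- tail estimate
  set S : Set (EuclideanSpace ℝ (Fin 3)) := (closedBall (0 : EuclideanSpace ℝ (Fin 3)) (2*R))ᶜ with hSdef
  have hS : MeasurableSet S := measurableSet_closedBall.compl
  have key : ∀ x ∈ S, ENNReal.ofReal (|V₁ x| / ‖x‖ ^ 2) * m ≤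
      4 * ∫⁻ y, ENNReal.ofReal (|V₁ x| * |V₁ y| / ‖x - y‖ ^ 2) := by
    intro x hx
    have hxnorm : 2*R < ‖x‖ := by
      simpa [hSdef, mem_closedBall, dist_zero_right, not_le] using hx
    have hx0 : 0 < ‖x‖ := lt_of_le_of_lt (by positivity) hxnorm
    calc ENNReal.ofReal (|V₁ x| / ‖x‖ ^ 2) * m
        = ∫⁻ y in ball (0 : EuclideanSpace ℝ (Fin 3)) R,
            ENNReal.ofReal (|V₁ x| / ‖x‖ ^ 2) * ENNReal.ofReal |V₁ y| :=
          (lintegral_const_mul' _ _ ENNReal.ofReal_ne_top).symm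
      _ ≤ ∫⁻ y in ball (0 : EuclideanSpace ℝ (Fin 3)) R,
            4 * ENNReal.ofReal (|V₁ x| * |V₁ y| / ‖x - y‖ ^ 2) := by
          refine lintegral_mono_ae ((ae_restrict_iff' measurableSet_ball).mpr
            (Filter.Eventually.of_forall fun y hy => ?_))
          have hyR : ‖y‖ < R := by simpa [dist_zero_right] using hy
          have hxy0 : 0 < ‖x - y‖ := by
            have h1 : ‖x‖ - ‖y‖ ≤ ‖x - y‖ := norm_sub_norm_le x y
            linarith
          have hle : ‖x - y‖ ^ 2 ≤ 4 * ‖x‖ ^ 2 := by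
            have h1 : ‖x - y‖ ≤ ‖x‖ + ‖y‖ := norm_sub_le x y
            nlinarith [norm_nonneg (x - y), norm_nonneg y]
          rw [← ENNReal.ofReal_mul (div_nonneg (abs_nonneg _) (by positivity)),
            show (4:ℝ≥0∞) = ENNReal.ofReal 4 by norm_num,
            ← ENNReal.ofReal_mul (by norm_num : (0:ℝ) ≤ 4)]
          apply ENNReal.ofReal_le_ofReal
          have ha : (0:ℝ) ≤ |V₁ x| * |V₁ y| := by positivity
          rw [div_mul_eq_mul_div, mul_div_assoc' 4 _ _]
          rw [div_le_div_iff₀ (by positivity) (by positivity)]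
          nlinarith
      _ = 4 * ∫⁻ y in ball (0 : EuclideanSpace ℝ (Fin 3)) R,
            ENNReal.ofReal (|V₁ x| * |V₁ y| / ‖x - y‖ ^ 2) :=
          lintegral_const_mul' _ _ (by simp)
      _ ≤ 4 * ∫⁻ y, ENNReal.ofReal (|V₁ x| * |V₁ y| / ‖x - y‖ ^ 2) :=
          mul_le_mul_right (setLIntegral_le_lintegral _ _) _
  have h2 : (∫⁻ x in S, ENNReal.ofReal (|V₁ x| / ‖x‖ ^ 2)) * m ≤
      4 * ∫⁻ x, ∫⁻ y, ENNReal.ofReal (|V₁ x| * |V₁ y| / ‖x - y‖ ^ 2) := by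
    rw [← lintegral_mul_const' m _ hmfin.ne]
    calc ∫⁻ x in S, ENNReal.ofReal (|V₁ x| / ‖x‖ ^ 2) * m
        ≤ ∫⁻ x in S, 4 * ∫⁻ y, ENNReal.ofReal (|V₁ x| * |V₁ y| / ‖x - y‖ ^ 2) :=
          lintegral_mono_ae ((ae_restrict_iff' hS).mpr (Filter.Eventually.of_forall key))
      _ = 4 * ∫⁻ x in S, ∫⁻ y, ENNReal.ofReal (|V₁ x| * |V₁ y| / ‖x - y‖ ^ 2) :=
          lintegral_const_mul' _ _ (by simp)
      _ ≤ 4 * ∫⁻ x, ∫⁻ y, ENNReal.ofReal (|V₁ x| * |V₁ y| / ‖x - y‖ ^ 2) :=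
          mul_le_mul_right (setLIntegral_le_lintegral _ _) _
  have h4I : (4 : ℝ≥0∞) * ∫⁻ x, ∫⁻ y, ENNReal.ofReal (|V₁ x| * |V₁ y| / ‖x - y‖ ^ 2) ≠ ⊤ :=
    ENNReal.mul_ne_top (by simp) hRollnik.ne
  have htail : ∫⁻ x in S, ENNReal.ofReal (|V₁ x| / ‖x‖ ^ 2) < ⊤ := by
    have hdiv := (ENNReal.le_div_iff_mul_le (Or.inl hmpos) (Or.inl hmfin.ne)).mpr h2
    exact lt_of_le_of_lt hdiv (ENNReal.div_lt_top h4I hmpos)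
  -- assemble
  refine ⟨(hV₁.abs.mul (((measurable_norm.pow_const 2).const_mul (-t)).exp)).aestronglyMeasurable, ?_⟩
  rw [hasFiniteIntegral_iff_norm, ← lintegral_add_compl _
    (measurableSet_closedBall : MeasurableSet (closedBall (0 : EuclideanSpace ℝ (Fin 3)) (2*R)))]
  refine ENNReal.add_lt_top.mpr ⟨?_, ?_⟩
  · -- local part
    have hb : ∀ x, ENNReal.ofReal ‖|V₁ x| * Real.exp (-t * ‖x‖ ^ 2)‖ ≤ ENNReal.ofReal |V₁ x| := by
      intro x
      apply ENNReal.ofReal_le_ofReal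
      rw [Real.norm_eq_abs, abs_mul, abs_abs, abs_of_pos (Real.exp_pos _)]
      have h1 : Real.exp (-t * ‖x‖ ^ 2) ≤ 1 := Real.exp_le_one_iff.mpr (by nlinarith [sq_nonneg ‖x‖])
      nlinarith [abs_nonneg (V₁ x)]
    refine lt_of_le_of_lt (lintegral_mono fun x => hb x) ?_
    have hInt : IntegrableOn V₁ (closedBall (0 : EuclideanSpace ℝ (Fin 3)) (2*R)) volume :=
      hloc.integrableOn_isCompact (isCompact_closedBall _ _)
    have := hInt.2
    rw [hasFiniteIntegral_iff_norm] at this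
    simpa [Real.norm_eq_abs] using this
  · -- tail part
    have hb : ∀ x ∈ S, ENNReal.ofReal ‖|V₁ x| * Real.exp (-t * ‖x‖ ^ 2)‖ ≤
        ENNReal.ofReal t⁻¹ * ENNReal.ofReal (|V₁ x| / ‖x‖ ^ 2) := by
      intro x hx
      have hxnorm : 2*R < ‖x‖ := by
        simpa [hSdef, mem_closedBall, dist_zero_right, not_le] using hx
      have hx0 : 0 < ‖x‖ := lt_of_le_of_lt (by positivity) hxnorm
      rw [← ENNReal.ofReal_mul (inv_nonneg.mpr ht.le)]
      apply ENNReal.ofReal_le_ofReal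
      rw [Real.norm_eq_abs, abs_mul, abs_abs, abs_of_pos (Real.exp_pos _)]
      have hu : 0 < t * ‖x‖ ^ 2 := by positivity
      have hexp : Real.exp (-t * ‖x‖ ^ 2) ≤ (t * ‖x‖ ^ 2)⁻¹ := by
        rw [neg_mul, Real.exp_neg]
        exact inv_anti₀ hu (le_trans (by linarith) (Real.add_one_le_exp _))
      have h1 : |V₁ x| * Real.exp (-t * ‖x‖ ^ 2) ≤ |V₁ x| * (t * ‖x‖ ^ 2)⁻¹ :=
        mul_le_mul_of_nonneg_left hexp (abs_nonneg _)
      refine h1.trans (le_of_eq ?_)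
      rw [mul_inv, div_eq_mul_inv]
      ring
    calc ∫⁻ x in S, ENNReal.ofReal ‖|V₁ x| * Real.exp (-t * ‖x‖ ^ 2)‖
        ≤ ∫⁻ x in S, ENNReal.ofReal t⁻¹ * ENNReal.ofReal (|V₁ x| / ‖x‖ ^ 2) :=
          lintegral_mono_ae ((ae_restrict_iff' hS).mpr (Filter.Eventually.of_forall hb))
      _ = ENNReal.ofReal t⁻¹ * ∫⁻ x in S, ENNReal.ofReal (|V₁ x| / ‖x‖ ^ 2) :=
          lintegral_const_mul' _ _ ENNReal.ofReal_ne_top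
      _ < ⊤ := ENNReal.mul_lt_top (by simp) htail

end RollnikAux

/-- If `V = V₁ + V₂` on `ℝ³`, where `V₁` is Borel measurable,
locally integrable and Rollnik, and `V₂` is Borel measurable and essentially
bounded, then `V` satisfies condition (V.2): for every `t > 0`, the function
`x ↦ |V x| exp (-t ‖x‖²)` is integrable. -/
theorem rollnik_plus_bounded_satisfies_V2
    (V V₁ V₂ : EuclideanSpace ℝ (Fin 3) → ℝ)
    (hsum : V = V₁ + V₂)
    (hV₁ : Measurable V₁) (hV₂ : Measurable V₂)
    (hloc : LocallyIntegrable V₁ volume)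
    (hRollnik : ∫⁻ x, ∫⁻ y, ENNReal.ofReal (|V₁ x| * |V₁ y| / ‖x - y‖ ^ 2) < ⊤)
    (hbdd : ∃ M : ℝ, ∀ᵐ x ∂(volume : Measure (EuclideanSpace ℝ (Fin 3))),
      |V₂ x| ≤ M) :
    ∀ t : ℝ, 0 < t →
      Integrable (fun x : EuclideanSpace ℝ (Fin 3) =>
        |V x| * Real.exp (-t * ‖x‖ ^ 2)) volume := by
  obtain ⟨M, hM⟩ := hbdd
  intro t ht
  have hgauss := RollnikAux.gauss_integrable ht
  have h2 : Integrable (fun x : EuclideanSpace ℝ (Fin 3) =>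
      |V₂ x| * Real.exp (-t * ‖x‖ ^ 2)) volume := by
    refine Integrable.mono' (hgauss.const_mul M)
      ((hV₂.abs.mul (((measurable_norm.pow_const 2).const_mul (-t)).exp)).aestronglyMeasurable) ?_
    filter_upwards [hM] with x hx
    rw [Real.norm_eq_abs, abs_mul, abs_abs, abs_of_pos (Real.exp_pos _)]
    exact mul_le_mul_of_nonneg_right hx (Real.exp_pos _).le
  have h1 := RollnikAux.piece1 hV₁ hloc hRollnik ht
  have hVmeas : Measurable V := by rw [hsum]; exact hV₁.add hV₂
  refine Integrable.mono' (h1.add h2)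
    ((hVmeas.abs.mul (((measurable_norm.pow_const 2).const_mul (-t)).exp)).aestronglyMeasurable) ?_
  refine Filter.Eventually.of_forall fun x => ?_
  rw [Real.norm_eq_abs, abs_mul, abs_abs, abs_of_pos (Real.exp_pos _)]
  have habs : |V x| ≤ |V₁ x| + |V₂ x| := by
    rw [hsum]; exact abs_add_le _ _
  have h3 := mul_le_mul_of_nonneg_right habs (Real.exp_pos (-t * ‖x‖ ^ 2)).le
  simp only [Pi.add_apply]
  linarith [h3]
end

section
/- Let d ≥ 1, a > 0, and let V : ℝ^d → ℝ be a Borel function satisfying condition (V.2). Then the effective potential V_eff(x) := ∫_{ℝ^d} V(y) G_a(x−y) dy is a continuous function on ℝ^d. -/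
open MeasureTheory

/-- The Gaussian kernel `G_a(x) = (4πa)^(-d/2) exp (-‖x‖²/(4a))` on `ℝ^d`. -/
noncomputable def gaussKernel (d : ℕ) (a : ℝ) (x : EuclideanSpace ℝ (Fin d)) : ℝ :=
  (4 * Real.pi * a) ^ (-(d : ℝ) / 2) * Real.exp (-‖x‖ ^ 2 / (4 * a))

lemma gaussKernel_continuous (d : ℕ) (a : ℝ) : Continuous (gaussKernel d a) := by
  unfold gaussKernel
  exact continuous_const.mul (((continuous_norm.pow 2).neg.div_const _).rexp)

lemma gaussKernel_nonneg (d : ℕ) (a : ℝ) (ha : 0 < a) (x : EuclideanSpace ℝ (Fin d)) :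
    0 ≤ gaussKernel d a x := by
  unfold gaussKernel
  have : (0:ℝ) < 4 * Real.pi * a := by positivity
  positivity

/-- If the Borel function `V : ℝ^d → ℝ` satisfies condition
(V.2), then the effective potential `V_eff x = ∫ V y * G_a (x - y) dy` is a
continuous function on `ℝ^d`. -/
theorem effectivePotential_continuous
    (d : ℕ) (hd : 1 ≤ d) (a : ℝ) (ha : 0 < a)
    (V : EuclideanSpace ℝ (Fin d) → ℝ) (hV : Measurable V)
    (hV2 : ∀ t : ℝ, 0 < t →
      Integrable (fun x : EuclideanSpace ℝ (Fin d) =>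
        |V x| * Real.exp (-t * ‖x‖ ^ 2)) volume) :
    Continuous (fun x : EuclideanSpace ℝ (Fin d) =>
      ∫ y, V y * gaussKernel d a (x - y)) := by
  rw [continuous_iff_continuousAt]
  intro x₀
  set t : ℝ := 1 / (8 * a) with ht_def
  have ht : 0 < t := by positivity
  set c : ℝ := (4 * Real.pi * a) ^ (-(d : ℝ) / 2) with hc_def
  have hc : 0 < c := Real.rpow_pos_of_pos (by positivity) _
  set C : ℝ := c * Real.exp ((‖x₀‖ + 1) ^ 2 / (4 * a)) with hC_def
  apply continuousAt_of_dominated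
    (bound := fun y => C * (|V y| * Real.exp (-t * ‖y‖ ^ 2)))
  · filter_upwards with x
    exact hV.aestronglyMeasurable.mul
      ((gaussKernel_continuous d a).comp (continuous_const.sub continuous_id)).aestronglyMeasurable
  · filter_upwards [Metric.ball_mem_nhds x₀ one_pos] with x hx
    filter_upwards with y
    have hx' : ‖x‖ ≤ ‖x₀‖ + 1 := by
      have h1 : ‖x - x₀‖ < 1 := mem_ball_iff_norm.mp hx
      have h2 : ‖x‖ - ‖x₀‖ ≤ ‖x - x₀‖ := norm_sub_norm_le x x₀
      linarith
    have hxy : ‖y‖ ≤ ‖x - y‖ + ‖x‖ := by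
      have h := norm_sub_norm_le y x
      rw [norm_sub_rev] at h
      linarith
    have hkey : -‖x - y‖ ^ 2 / (4 * a) ≤ (‖x₀‖ + 1) ^ 2 / (4 * a) + -t * ‖y‖ ^ 2 := by
      have key2 : ‖y‖ ^ 2 ≤ 2 * ‖x - y‖ ^ 2 + 2 * (‖x₀‖ + 1) ^ 2 := by
        nlinarith [norm_nonneg (x - y), norm_nonneg y, norm_nonneg x, hxy, hx',
          sq_nonneg (‖x - y‖ - ‖x‖), sq_nonneg (‖x - y‖ + ‖x‖)]
      have ha' : a ≠ 0 := ha.ne'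
      have e1 : -‖x - y‖ ^ 2 / (4 * a) = -(2 * ‖x - y‖ ^ 2) / (8 * a) := by
        field_simp; ring
      have e2 : (‖x₀‖ + 1) ^ 2 / (4 * a) + -t * ‖y‖ ^ 2
          = (2 * (‖x₀‖ + 1) ^ 2 - ‖y‖ ^ 2) / (8 * a) := by
        rw [ht_def]; field_simp; ring
      rw [e1, e2, div_le_div_iff_of_pos_right (show (0:ℝ) < 8 * a by positivity)]
      linarith
    have hG : gaussKernel d a (x - y) ≤ C * Real.exp (-t * ‖y‖ ^ 2) := by
      have h := Real.exp_le_exp.mpr hkey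
      rw [Real.exp_add] at h
      calc gaussKernel d a (x - y) = c * Real.exp (-‖x - y‖ ^ 2 / (4 * a)) := rfl
        _ ≤ c * (Real.exp ((‖x₀‖ + 1) ^ 2 / (4 * a)) * Real.exp (-t * ‖y‖ ^ 2)) :=
            mul_le_mul_of_nonneg_left h hc.le
        _ = C * Real.exp (-t * ‖y‖ ^ 2) := by rw [hC_def]; ring
    calc ‖V y * gaussKernel d a (x - y)‖ = |V y| * gaussKernel d a (x - y) := by
          rw [norm_mul, Real.norm_eq_abs, Real.norm_eq_abs,
            abs_of_nonneg (gaussKernel_nonneg d a ha _)]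
      _ ≤ |V y| * (C * Real.exp (-t * ‖y‖ ^ 2)) :=
          mul_le_mul_of_nonneg_left hG (abs_nonneg _)
      _ = C * (|V y| * Real.exp (-t * ‖y‖ ^ 2)) := by ring
  · exact (hV2 t ht).const_mul C
  · filter_upwards with y
    exact (continuous_const.mul ((gaussKernel_continuous d a).comp
      (continuous_id.sub continuous_const))).continuousAt
end
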